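/- Let V be a finite set with weights w : V × V → [0,1], w(u,v)+w(v,u)=1 for distinct u,v. Let π¹ be any ranking of V and π* a ranking minimizing C(·) over all rankings of V. Define r(v) = 4√(2C(π¹)) + 2b(π¹,v,π¹(v)+1/2). Then for every v ∈ V: |π*(v) − π¹(v)| ≤ r(v). -/

import Mathlib

noncomputable def pos {V : Type*} [Fintype V] (π : V ≃ Fin (Fintype.card V)) (v : V) : ℝ :=
  ((π v : ℕ) : ℝ) + 1

noncomputable def bwt {V : Type*} [Fintype V] [DecidableEq V] (w : V → V → ℝ)
    (π : V ≃ Fin (Fintype.card V)) (v : V) (p : ℝ) : ℝ :=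
  ∑ u ∈ Finset.univ.erase v, if pos π u < p then w v u else w u v

noncomputable def fastCost {V : Type*} [Fintype V] (w : V → V → ℝ)
    (π : V ≃ Fin (Fintype.card V)) : ℝ :=
  ∑ uv ∈ Finset.univ.filter (fun uv : V × V => π uv.1 < π uv.2), w uv.2 uv.1

/-!
Let `d(π, σ)` be the number of pairs ordered differently by `π` and `σ`; as `w u v + w v u = 1`,
`d(π, σ) ≤ C(π) + C(σ)`. If `A` and `B` are the items crossing a threshold `p` upwards and
downwards from `π` to `σ`, then `|A| = |B|` and every pair of `A × B` is discordant, so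
`|b(π,v,p) - b(σ,v,p)| ≤ |A| + |B| ≤ 2 √d(π, σ)`. Optimality of `π*` gives
`b(π*,v,π*(v)+½) ≤ b(π*,v,p)` for every gap `p` between positions. Finally every item placed by
`π¹` strictly between the two positions of `v` contributes `1` to
`b(π¹,v,π¹(v)+½) + b(π¹,v,π*(v)±½)`, and two comparisons of `π¹` with `π*` cost `4 √(2 C(π¹))`.
-/

section

open Finset

variable {V : Type*} [Fintype V]

lemma pos_lt_pos_iff {π : V ≃ Fin (Fintype.card V)} {u v : V} :
    pos π u < pos π v ↔ π u < π v := by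
  simp [pos]

lemma pos_injective (π : V ≃ Fin (Fintype.card V)) : Function.Injective (pos π) :=
  fun _ _ h => π.injective (Fin.ext (by exact_mod_cast add_right_cancel h))

lemma pos_ne_pos_add_half (π σ : V ≃ Fin (Fintype.card V)) (u v : V) :
    pos π u ≠ pos σ v + 1 / 2 := by
  intro h
  have h2 : ((2 * (π u : ℕ) : ℕ) : ℝ) = ((2 * (σ v : ℕ) + 1 : ℕ) : ℝ) := by
    push_cast; unfold pos at h; linarith
  have := Nat.cast_injective h2
  omega

lemma pos_lt_pos_add_half_iff {π : V ≃ Fin (Fintype.card V)} {u v : V} (huv : u ≠ v) :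
    pos π u < pos π v + 1 / 2 ↔ π u < π v := by
  have hne : (π u : ℕ) ≠ π v := fun h => huv (π.injective (Fin.ext h))
  rw [Fin.lt_def]
  unfold pos
  constructor
  · intro h
    have : (π u : ℕ) < (π v : ℕ) + 1 := by
      exact_mod_cast (by linarith : ((π u : ℕ) : ℝ) < (π v : ℕ) + 1)
    omega
  · intro h
    have : ((π u : ℕ) : ℝ) + 1 ≤ (π v : ℕ) := by exact_mod_cast h
    linarith

lemma pos_lt_pos_sub_half_iff {π : V ≃ Fin (Fintype.card V)} {u v : V} :
    pos π u < pos π v - 1 / 2 ↔ π u < π v := by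
  rw [Fin.lt_def]
  unfold pos
  constructor
  · intro h
    exact_mod_cast (by linarith : ((π u : ℕ) : ℝ) < (π v : ℕ))
  · intro h
    have : ((π u : ℕ) : ℝ) + 1 ≤ (π v : ℕ) := by exact_mod_cast h
    linarith

lemma card_filter_pos_lt_eq (π σ : V ≃ Fin (Fintype.card V)) (p : ℝ) :
    #(univ.filter fun u => pos π u < p) = #(univ.filter fun u => pos σ u < p) := by
  have key : ∀ τ : V ≃ Fin (Fintype.card V),
      #(univ.filter fun u => pos τ u < p)
        = #(univ.filter fun i : Fin (Fintype.card V) => ((i : ℕ) : ℝ) + 1 < p) := fun τ =>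
    card_equiv τ fun u => by rw [mem_filter, mem_filter]; simp [pos]
  rw [key π, key σ]

lemma card_filter_lt_not_lt_eq (π σ : V ≃ Fin (Fintype.card V)) (p : ℝ) :
    #(univ.filter fun u => pos π u < p ∧ ¬ pos σ u < p)
      = #(univ.filter fun u => ¬ pos π u < p ∧ pos σ u < p) := by
  have hπ := card_filter_add_card_filter_not
    (s := univ.filter fun u => pos π u < p) (fun u => pos σ u < p)
  have hσ := card_filter_add_card_filter_not
    (s := univ.filter fun u => pos σ u < p) (fun u => pos π u < p)
  simp only [filter_filter, and_comm (a := pos σ _ < p)] at hπ hσ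
  have := card_filter_pos_lt_eq π σ p
  omega

lemma exists_ranking_lt_iff {f : V → ℝ} (hf : Function.Injective f) :
    ∃ π : V ≃ Fin (Fintype.card V), ∀ a b, π a < π b ↔ f a < f b := by
  classical
  let s : Finset ℝ := univ.image f
  let e := s.orderIsoOfFin (by rw [card_image_of_injective _ hf, card_univ])
  let g : V → s := fun a => ⟨f a, mem_image_of_mem f (mem_univ a)⟩
  have hg : Function.Bijective g := by
    refine ⟨fun a b hab => hf (congrArg Subtype.val hab), fun ⟨x, hx⟩ => ?_⟩
    obtain ⟨a, -, rfl⟩ := mem_image.mp hx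
    exact ⟨a, rfl⟩
  exact ⟨(Equiv.ofBijective g hg).trans e.symm.toEquiv, fun a b => e.symm.lt_iff_lt⟩

def discordantPairs (π σ : V ≃ Fin (Fintype.card V)) : Finset (V × V) :=
  univ.filter fun xy => π xy.1 < π xy.2 ∧ σ xy.2 < σ xy.1

lemma card_discordantPairs_le {w : V → V → ℝ} (hw : ∀ u v, 0 ≤ w u v)
    (hsum : ∀ u v, u ≠ v → w u v + w v u = 1) (π σ : V ≃ Fin (Fintype.card V)) :
    (#(discordantPairs π σ) : ℝ) ≤ fastCost w π + fastCost w σ := by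
  set I := discordantPairs π σ
  have hπ : ∑ xy ∈ I, w xy.2 xy.1 ≤ fastCost w π :=
    sum_le_sum_of_subset_of_nonneg
      (fun xy hxy => mem_filter.mpr ⟨mem_univ _, (mem_filter.mp hxy).2.1⟩) fun xy _ _ => hw _ _
  have hσ : ∑ xy ∈ I, w xy.1 xy.2 ≤ fastCost w σ := by
    rw [show ∑ xy ∈ I, w xy.1 xy.2 = ∑ xy ∈ I.map (Equiv.prodComm V V).toEmbedding, w xy.2 xy.1
      from (sum_map I (Equiv.prodComm V V).toEmbedding fun xy => w xy.2 xy.1).symm]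
    refine sum_le_sum_of_subset_of_nonneg (fun xy hxy => ?_) fun xy _ _ => hw _ _
    obtain ⟨ab, hab, rfl⟩ := mem_map.mp hxy
    exact mem_filter.mpr ⟨mem_univ _, (mem_filter.mp hab).2.2⟩
  have hI : ∑ xy ∈ I, (w xy.2 xy.1 + w xy.1 xy.2) = #I := by
    have hne : ∀ xy ∈ I, xy.2 ≠ xy.1 := fun xy hxy h =>
      (mem_filter.mp hxy).2.1.ne' (congrArg π h)
    rw [sum_congr rfl fun xy hxy => hsum xy.2 xy.1 (hne xy hxy), sum_const, nsmul_one]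
  rw [sum_add_distrib] at hI
  linarith

variable [DecidableEq V]

lemma abs_bwt_sub_bwt_le {w : V → V → ℝ} (hw : ∀ u v, 0 ≤ w u v)
    (hsum : ∀ u v, u ≠ v → w u v + w v u = 1) (π σ : V ≃ Fin (Fintype.card V)) (v : V)
    (p : ℝ) : |bwt w π v p - bwt w σ v p| ≤ 2 * √(fastCost w π + fastCost w σ) := by
  set A := univ.filter fun u => pos π u < p ∧ ¬ pos σ u < p
  set B := univ.filter fun u => ¬ pos π u < p ∧ pos σ u < p
  have hAB : #A = #B := card_filter_lt_not_lt_eq π σ p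
  have hsq : (#A : ℝ) ^ 2 ≤ fastCost w π + fastCost w σ := by
    have hsub : A ×ˢ B ⊆ discordantPairs π σ := fun xy hxy => by
      obtain ⟨hx, hy⟩ := mem_product.mp hxy
      obtain ⟨-, hx₁, hx₂⟩ := mem_filter.mp hx
      obtain ⟨-, hy₁, hy₂⟩ := mem_filter.mp hy
      exact mem_filter.mpr ⟨mem_univ _, pos_lt_pos_iff.mp (hx₁.trans_le (not_lt.mp hy₁)),
        pos_lt_pos_iff.mp (hy₂.trans_le (not_lt.mp hx₂))⟩
    calc (#A : ℝ) ^ 2 = (#(A ×ˢ B) : ℕ) := by rw [card_product, ← hAB]; push_cast; ring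
      _ ≤ #(discordantPairs π σ) := by exact_mod_cast card_le_card hsub
      _ ≤ _ := card_discordantPairs_le hw hsum π σ
  have hterm : ∀ u ∈ univ.erase v,
      |(if pos π u < p then w v u else w u v) - (if pos σ u < p then w v u else w u v)|
        ≤ (if u ∈ A then 1 else 0) + (if u ∈ B then 1 else 0) := fun u hu => by
    have h := hsum v u (ne_of_mem_erase hu).symm
    have := hw u v; have := hw v u
    by_cases h₁ : pos π u < p <;> by_cases h₂ : pos σ u < p <;>
      simp [A, B, h₁, h₂, -not_lt, abs_le] <;> constructor <;> linarith
  calc |bwt w π v p - bwt w σ v p|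
      ≤ ∑ u ∈ univ.erase v, ((if u ∈ A then 1 else 0) + (if u ∈ B then 1 else 0)) := by
        rw [bwt, bwt, ← sum_sub_distrib]
        exact (abs_sum_le_sum_abs _ _).trans (sum_le_sum hterm)
    _ ≤ ∑ u, ((if u ∈ A then 1 else 0) + (if u ∈ B then 1 else 0)) :=
        sum_le_sum_of_subset_of_nonneg (subset_univ _) fun _ _ _ => by positivity
    _ = 2 * #A := by simp only [sum_add_distrib, sum_boole]; simp [hAB]; ring
    _ ≤ 2 * √(fastCost w π + fastCost w σ) := by gcongr; exact Real.le_sqrt_of_sq_le hsq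

lemma bwt_congr {w : V → V → ℝ} {π σ : V ≃ Fin (Fintype.card V)} {v : V} {p q : ℝ}
    (h : ∀ u, u ≠ v → (pos π u < p ↔ pos σ u < q)) : bwt w π v p = bwt w σ v q :=
  sum_congr rfl fun u hu => if_congr (h u (ne_of_mem_erase hu)) rfl rfl

lemma bwt_pos_sub_half (w : V → V → ℝ) (π : V ≃ Fin (Fintype.card V)) (v : V) :
    bwt w π v (pos π v - 1 / 2) = bwt w π v (pos π v + 1 / 2) :=
  bwt_congr fun _ huv => pos_lt_pos_sub_half_iff.trans (pos_lt_pos_add_half_iff huv).symm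

def restCost (w : V → V → ℝ) (π : V ≃ Fin (Fintype.card V)) (v : V) : ℝ :=
  ∑ a ∈ univ.erase v, ∑ b ∈ univ.erase v, if π a < π b then w b a else 0

lemma restCost_congr {w : V → V → ℝ} {π σ : V ≃ Fin (Fintype.card V)} {v : V}
    (h : ∀ a b, a ≠ v → b ≠ v → (π a < π b ↔ σ a < σ b)) : restCost w π v = restCost w σ v :=
  sum_congr rfl fun a ha => sum_congr rfl fun b hb =>
    if_congr (h a b (ne_of_mem_erase ha) (ne_of_mem_erase hb)) rfl rfl

lemma fastCost_eq_restCost_add_bwt (w : V → V → ℝ) (π : V ≃ Fin (Fintype.card V)) (v : V) :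
    fastCost w π = restCost w π v + bwt w π v (pos π v + 1 / 2) := by
  have hsplit : ∀ f : V → ℝ, ∑ a, f a = ∑ a ∈ univ.erase v, f a + f v := fun f =>
    (sum_erase_add _ _ (mem_univ v)).symm
  have hv : ∑ u ∈ univ.erase v, ((if π u < π v then w v u else 0)
      + (if π v < π u then w u v else 0)) = bwt w π v (pos π v + 1 / 2) := by
    refine sum_congr rfl fun u hu => ?_
    have huv := ne_of_mem_erase hu
    simp only [pos_lt_pos_add_half_iff huv]
    rcases lt_or_gt_of_ne (π.injective.ne huv) with h | h <;> simp [h, h.not_gt]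
  rw [fastCost, sum_filter, ← univ_product_univ, sum_product, hsplit, restCost, ← hv,
    sum_add_distrib]
  simp only [hsplit fun b => if π _ < π b then w b _ else 0, sum_add_distrib, lt_irrefl,
    if_false, add_zero]
  ring

-- Moving `v` of an optimal ranking to the gap `p` leaves the cost of all other pairs unchanged.
lemma bwt_le_bwt_of_forall_fastCost_le {w : V → V → ℝ} {πstar : V ≃ Fin (Fintype.card V)}
    (hopt : ∀ π, fastCost w πstar ≤ fastCost w π) (v : V) {p : ℝ}
    (hp : ∀ u, u ≠ v → pos πstar u ≠ p) :
    bwt w πstar v (pos πstar v + 1 / 2) ≤ bwt w πstar v p := by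
  have hf : Function.Injective (Function.update (pos πstar) v p) := by
    intro a b hab
    by_cases ha : a = v <;> by_cases hb : b = v
    · rw [ha, hb]
    · subst ha; simp [hb] at hab; exact absurd hab.symm (hp b hb)
    · subst hb; simp [ha] at hab; exact absurd hab (hp a ha)
    · exact pos_injective πstar (by simpa [ha, hb] using hab)
  obtain ⟨π, hπ⟩ := exists_ranking_lt_iff hf
  have hrest : restCost w π v = restCost w πstar v := restCost_congr fun a b ha hb => by
    rw [hπ, Function.update_of_ne ha, Function.update_of_ne hb, pos_lt_pos_iff]
  have hbwt : bwt w π v (pos π v + 1 / 2) = bwt w πstar v p := bwt_congr fun u hu => by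
    rw [pos_lt_pos_add_half_iff hu, hπ, Function.update_of_ne hu, Function.update_self]
  have hle := hopt π
  rw [fastCost_eq_restCost_add_bwt w πstar v, fastCost_eq_restCost_add_bwt w π v, hrest,
    hbwt] at hle
  linarith

lemma card_le_bwt_add_bwt {w : V → V → ℝ} (hw : ∀ u v, 0 ≤ w u v)
    (hsum : ∀ u v, u ≠ v → w u v + w v u = 1) (π : V ≃ Fin (Fintype.card V)) {v : V}
    {S : Finset V} (hv : v ∉ S) {p q : ℝ} (hS : ∀ u ∈ S, pos π u < p ∧ ¬ pos π u < q) :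
    (#S : ℝ) ≤ bwt w π v p + bwt w π v q := by
  set t : ℝ → V → ℝ := fun r u => if pos π u < r then w v u else w u v
  have ht : ∀ r u, 0 ≤ t r u := fun r u => by simp only [t]; split <;> exact hw _ _
  have hS' : ∀ u ∈ S, t p u + t q u = 1 := fun u hu => by
    simp only [t, if_pos (hS u hu).1, if_neg (hS u hu).2]
    exact hsum v u fun h => hv (h ▸ hu)
  calc (#S : ℝ) = ∑ u ∈ S, (t p u + t q u) := by rw [sum_congr rfl hS', sum_const, nsmul_one]
    _ ≤ ∑ u ∈ univ.erase v, (t p u + t q u) :=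
        sum_le_sum_of_subset_of_nonneg (fun u hu => mem_erase.mpr ⟨fun h => hv (h ▸ hu),
          mem_univ u⟩) fun u _ _ => add_nonneg (ht p u) (ht q u)
    _ = bwt w π v p + bwt w π v q := sum_add_distrib

lemma exists_abs_pos_sub_pos_le_bwt_add_bwt {w : V → V → ℝ} (hw : ∀ u v, 0 ≤ w u v)
    (hsum : ∀ u v, u ≠ v → w u v + w v u = 1) (π σ : V ≃ Fin (Fintype.card V)) (v : V) :
    ∃ x, (x = pos σ v + 1 / 2 ∨ x = pos σ v - 1 / 2) ∧
      |pos σ v - pos π v| ≤ bwt w π v (pos π v + 1 / 2) + bwt w π v x := by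
  rcases le_or_gt (π v) (σ v) with h | h
  · refine ⟨pos σ v + 1 / 2, Or.inl rfl, ?_⟩
    have hcard := card_le_bwt_add_bwt hw hsum π (v := v)
      (S := (Ioc (π v) (σ v)).map π.symm.toEmbedding) (p := pos σ v + 1 / 2)
      (q := pos π v + 1 / 2) (by simp [mem_map_equiv]) fun u hu => by
        obtain ⟨i, hi, rfl⟩ := mem_map.mp hu
        obtain ⟨hi₁, hi₂⟩ := mem_Ioc.mp hi
        have h₁ : ((π v : ℕ) : ℝ) + 1 ≤ (i : ℕ) := by exact_mod_cast hi₁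
        have h₂ : ((i : ℕ) : ℝ) ≤ (σ v : ℕ) := by exact_mod_cast hi₂
        simp only [Equiv.coe_toEmbedding, Equiv.apply_symm_apply, pos]
        exact ⟨by linarith, not_lt.mpr (by linarith)⟩
    rw [card_map, Fin.card_Ioc, Nat.cast_sub (Fin.le_def.mp h)] at hcard
    have : ((π v : ℕ) : ℝ) ≤ (σ v : ℕ) := by exact_mod_cast h
    rw [abs_of_nonneg (by unfold pos; linarith)]
    unfold pos at hcard ⊢
    linarith
  · refine ⟨pos σ v - 1 / 2, Or.inr rfl, ?_⟩
    have hcard := card_le_bwt_add_bwt hw hsum π (v := v)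
      (S := (Ico (σ v) (π v)).map π.symm.toEmbedding) (p := pos π v + 1 / 2)
      (q := pos σ v - 1 / 2) (by simp [mem_map_equiv]) fun u hu => by
        obtain ⟨i, hi, rfl⟩ := mem_map.mp hu
        obtain ⟨hi₁, hi₂⟩ := mem_Ico.mp hi
        have h₁ : ((σ v : ℕ) : ℝ) ≤ (i : ℕ) := by exact_mod_cast hi₁
        have h₂ : ((i : ℕ) : ℝ) + 1 ≤ (π v : ℕ) := by exact_mod_cast hi₂
        simp only [Equiv.coe_toEmbedding, Equiv.apply_symm_apply, pos]
        exact ⟨by linarith, not_lt.mpr (by linarith)⟩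
    rw [card_map, Fin.card_Ico, Nat.cast_sub (Fin.le_def.mp h.le)] at hcard
    have : ((σ v : ℕ) : ℝ) ≤ (π v : ℕ) := by exact_mod_cast h.le
    rw [abs_of_nonpos (by unfold pos; linarith)]
    unfold pos at hcard ⊢
    linarith

end

theorem stmt7 {V : Type*} [Fintype V] [DecidableEq V] (w : V → V → ℝ)
    (h01 : ∀ u v : V, 0 ≤ w u v ∧ w u v ≤ 1)
    (hsum : ∀ u v : V, u ≠ v → w u v + w v u = 1)
    (π1 πstar : V ≃ Fin (Fintype.card V))
    (hopt : ∀ π : V ≃ Fin (Fintype.card V), fastCost w πstar ≤ fastCost w π) :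
    ∀ v : V, |pos πstar v - pos π1 v|
      ≤ 4 * Real.sqrt (2 * fastCost w π1) + 2 * bwt w π1 v (pos π1 v + 1/2) := by
  intro v
  have hw : ∀ u v, 0 ≤ w u v := fun u v => (h01 u v).1
  obtain ⟨x, hx, hdist⟩ := exists_abs_pos_sub_pos_le_bwt_add_bwt hw hsum π1 πstar v
  have hx' : bwt w πstar v x = bwt w πstar v (pos πstar v + 1 / 2) := by
    rcases hx with rfl | rfl
    exacts [rfl, bwt_pos_sub_half w πstar v]
  have hmin := bwt_le_bwt_of_forall_fastCost_le hopt v (p := pos π1 v + 1 / 2)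
    fun u _ => pos_ne_pos_add_half πstar π1 u v
  have hclose : ∀ p, |bwt w π1 v p - bwt w πstar v p| ≤ 2 * √(2 * fastCost w π1) := fun p =>
    (abs_bwt_sub_bwt_le hw hsum π1 πstar v p).trans <| by gcongr; linarith [hopt π1]
  have h₁ := abs_le.mp (hclose x)
  have h₂ := abs_le.mp (hclose (pos π1 v + 1 / 2))
  linarith [h₁.2, h₂.1]
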